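/- Let A be a real n×n matrix whose symmetric part C := (A + Aᵀ)/2 is positive definite. Then ∫_{ℝⁿ}∫_{ℝⁿ} [exp(−(x+iy)ᵀA(x−iy)/2) + exp(−(x−iy)ᵀA(x+iy)/2)] dx dy = 2(2π)ⁿ / det(A). In particular det(A) > 0. -/

import Mathlib

/-!
Write `A = C + L` with `C = (A + Aᵀ)/2` symmetric and `L = (A - Aᵀ)/2` antisymmetric. For
`z = x + i y` one gets `zᵀ A z̄ = xᵀ C x + yᵀ C y - 2 i xᵀ L y`, so the `y`-integral is the Fourier
transform of a Gaussian, `√((2π)ⁿ / det C) · exp (-xᵀ L C⁻¹ Lᵀ x / 2)` (computed by diagonalizing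
`C` orthogonally). The remaining `x`-integral is again Gaussian, with matrix
`C + L C⁻¹ Lᵀ = Aᵀ C⁻¹ A` of determinant `(det A)² / det C`, so the first term has total mass
`(2π)ⁿ / |det A|`. The second term is the first one for `Aᵀ`. Finally `det (C + t L) ≠ 0` for all
real `t`, because `vᵀ (C + t L) v = vᵀ C v`, so `det A` has the sign of `det C > 0`.
-/

open MeasureTheory Matrix
open Complex (I)
open scoped Real

noncomputable section

namespace ComplexGaussian

variable {ι : Type*}

def symmPart (A : Matrix ι ι ℝ) : Matrix ι ι ℝ := ((1 : ℝ) / 2) • (A + Aᵀ)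

def antisymmPart (A : Matrix ι ι ℝ) : Matrix ι ι ℝ := ((1 : ℝ) / 2) • (A - Aᵀ)

lemma symmPart_add_antisymmPart (A : Matrix ι ι ℝ) : symmPart A + antisymmPart A = A := by
  rw [symmPart, antisymmPart]
  module

lemma transpose_symmPart (A : Matrix ι ι ℝ) : (symmPart A)ᵀ = symmPart A := by
  rw [symmPart, transpose_smul, transpose_add, transpose_transpose, add_comm]

lemma transpose_antisymmPart (A : Matrix ι ι ℝ) : (antisymmPart A)ᵀ = -antisymmPart A := by
  rw [antisymmPart, transpose_smul, transpose_sub, transpose_transpose, ← smul_neg, neg_sub]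

lemma symmPart_transpose (A : Matrix ι ι ℝ) : symmPart Aᵀ = symmPart A := by
  rw [symmPart, transpose_transpose, add_comm, symmPart]

variable [Fintype ι]

lemma dotProduct_transpose_mul_mul_mulVec (L N : Matrix ι ι ℝ) (u v : ι → ℝ) :
    u ⬝ᵥ (Lᵀ * N * L) *ᵥ v = (L *ᵥ u) ⬝ᵥ N *ᵥ (L *ᵥ v) := by
  rw [← mulVec_mulVec, ← mulVec_mulVec, dotProduct_mulVec u Lᵀ, vecMul_transpose]

lemma dotProduct_mulVec_self_eq_zero_of_transpose_eq_neg {L : Matrix ι ι ℝ} (hL : Lᵀ = -L)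
    (v : ι → ℝ) : v ⬝ᵥ L *ᵥ v = 0 := by
  have h : v ⬝ᵥ L *ᵥ v = v ⬝ᵥ Lᵀ *ᵥ v := by
    rw [dotProduct_mulVec, mulVec_transpose, dotProduct_comm]
  rw [hL, neg_mulVec, dotProduct_neg] at h
  linarith

def gaussKernel (M : Matrix ι ι ℝ) (w x : ι → ℝ) : ℂ :=
  Complex.exp (-(x ⬝ᵥ M *ᵥ x : ℝ) / 2 + (w ⬝ᵥ x : ℝ) * I)

/-- `exp (-zᵀ A z̄ / 2)` at `z = x + i y`. -/
def complexGaussian (A : Matrix ι ι ℝ) (x y : ι → ℝ) : ℂ :=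
  Complex.exp (-(∑ i, ∑ j, ((x i : ℂ) + (y i : ℂ) * I) * (A i j : ℂ) *
    ((x j : ℂ) - (y j : ℂ) * I)) / 2)

lemma continuous_gaussKernel (M : Matrix ι ι ℝ) (w : ι → ℝ) : Continuous (gaussKernel M w) := by
  unfold gaussKernel
  fun_prop

lemma norm_gaussKernel (M : Matrix ι ι ℝ) (w x : ι → ℝ) :
    ‖gaussKernel M w x‖ = Real.exp (-(x ⬝ᵥ M *ᵥ x) / 2) := by
  simp [gaussKernel, Complex.norm_exp]

lemma gaussKernel_mulVec (M L : Matrix ι ι ℝ) (w u : ι → ℝ) :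
    gaussKernel M w (L *ᵥ u) = gaussKernel (Lᵀ * M * L) (Lᵀ *ᵥ w) u := by
  rw [gaussKernel, gaussKernel, dotProduct_transpose_mul_mul_mulVec, dotProduct_mulVec w,
    mulVec_transpose]

lemma sum_sum_mul_mul_conj (A : Matrix ι ι ℝ) (x y : ι → ℝ) :
    ∑ i, ∑ j, ((x i : ℂ) + (y i : ℂ) * I) * (A i j : ℂ) * ((x j : ℂ) - (y j : ℂ) * I)
      = ((x ⬝ᵥ A *ᵥ x + y ⬝ᵥ A *ᵥ y : ℝ) : ℂ) + ((y ⬝ᵥ A *ᵥ x - x ⬝ᵥ A *ᵥ y : ℝ) : ℂ) * I := by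
  simp only [dotProduct, mulVec, Finset.mul_sum, Complex.ofReal_add, Complex.ofReal_sub,
    Complex.ofReal_sum, Complex.ofReal_mul, ← Finset.sum_add_distrib, ← Finset.sum_sub_distrib,
    Finset.sum_mul]
  refine Finset.sum_congr rfl fun i _ => Finset.sum_congr rfl fun j _ => ?_
  linear_combination (-((y i : ℂ) * (A i j : ℂ) * (y j : ℂ))) * Complex.I_mul_I

lemma complexGaussian_eq_gaussKernel_mul (A : Matrix ι ι ℝ) (x y : ι → ℝ) :
    complexGaussian A x y
      = gaussKernel (symmPart A) 0 x * gaussKernel (symmPart A) ((antisymmPart A)ᵀ *ᵥ x) y := by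
  have hsymm : ∀ v, v ⬝ᵥ symmPart A *ᵥ v = v ⬝ᵥ A *ᵥ v := by
    intro v
    rw [symmPart, smul_mulVec, add_mulVec, dotProduct_smul, dotProduct_add, dotProduct_mulVec v Aᵀ,
      vecMul_transpose, dotProduct_comm, smul_eq_mul]
    ring
  have hcross : (antisymmPart A)ᵀ *ᵥ x ⬝ᵥ y = (x ⬝ᵥ A *ᵥ y - y ⬝ᵥ A *ᵥ x) / 2 := by
    rw [transpose_antisymmPart, antisymmPart, ← smul_neg, neg_sub, smul_mulVec, sub_mulVec, smul_dotProduct, sub_dotProduct, mulVec_transpose,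
      ← dotProduct_mulVec, dotProduct_comm (A *ᵥ x), smul_eq_mul]
    ring
  rw [complexGaussian, gaussKernel, gaussKernel, ← Complex.exp_add, sum_sum_mul_mul_conj, hsymm,
    hsymm, hcross, zero_dotProduct]
  congr 1
  push_cast
  ring

lemma complexGaussian_transpose (A : Matrix ι ι ℝ) (x y : ι → ℝ) :
    complexGaussian Aᵀ x y = Complex.exp (-(∑ i, ∑ j, ((x i : ℂ) - (y i : ℂ) * I) *
      (A i j : ℂ) * ((x j : ℂ) + (y j : ℂ) * I)) / 2) := by
  rw [complexGaussian, Finset.sum_comm]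
  congr 3
  exact Finset.sum_congr rfl fun i _ => Finset.sum_congr rfl fun j _ => by
    rw [transpose_apply]
    ring

variable [DecidableEq ι]

lemma measurePreserving_mulVec {U : Matrix ι ι ℝ} (hU : Uᵀ * U = 1) :
    MeasurePreserving (U *ᵥ ·) volume volume := by
  have hdet : |U.det| = 1 := by
    have : |U.det| ^ 2 = 1 := by simpa [sq_abs, sq] using congrArg det hU
    exact (pow_eq_one_iff_of_nonneg (abs_nonneg _) two_ne_zero).mp this
  refine ⟨(toLin' U).continuous_of_finiteDimensional.measurable, ?_⟩
  have hmap := Real.map_matrix_volume_pi_eq_smul_volume_pi (M := U)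
    (by rintro h; simp [h] at hdet)
  rwa [abs_inv, hdet, inv_one, ENNReal.ofReal_one, one_smul] at hmap

lemma _root_.Matrix.PosDef.exists_orthogonal_diagonalization {M : Matrix ι ι ℝ} (hM : M.PosDef) :
    ∃ (U : Matrix ι ι ℝ) (d : ι → ℝ), Uᵀ * U = 1 ∧ (∀ i, 0 < d i) ∧ Uᵀ * M * U = diagonal d := by
  have h := hM.isHermitian.conjStarAlgAut_star_eigenvectorUnitary
  refine ⟨hM.isHermitian.eigenvectorUnitary, hM.isHermitian.eigenvalues, ?_,
    hM.eigenvalues_pos, ?_⟩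
  · simpa [star_eq_conjTranspose] using Unitary.coe_star_mul_self hM.isHermitian.eigenvectorUnitary
  · simpa [star_eq_conjTranspose, Unitary.conjStarAlgAut_apply] using h

lemma gaussKernel_diagonal (d v u : ι → ℝ) :
    gaussKernel (diagonal d) v u
      = Complex.exp (-∑ i, ((d i / 2 : ℝ) : ℂ) * (u i : ℂ) ^ 2 + ∑ i, (v i * I) * u i) := by
  simp only [gaussKernel, mulVec_diagonal, dotProduct]
  push_cast
  rw [neg_div, Finset.sum_div, Finset.sum_mul, ← Finset.sum_neg_distrib, ← Finset.sum_neg_distrib,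
    ← Finset.sum_add_distrib, ← Finset.sum_add_distrib]
  exact congrArg _ (Finset.sum_congr rfl fun i _ => by ring)

lemma integrable_gaussKernel_diagonal {d : ι → ℝ} (hd : ∀ i, 0 < d i) (v : ι → ℝ) :
    Integrable (gaussKernel (diagonal d) v) := by
  rw [show gaussKernel (diagonal d) v = _ from funext (gaussKernel_diagonal d v)]
  exact GaussianFourier.integrable_cexp_neg_sum_mul_add (fun i => by simpa using hd i) _

lemma integral_gaussKernel_diagonal {d : ι → ℝ} (hd : ∀ i, 0 < d i) (v : ι → ℝ) :
    ∫ u, gaussKernel (diagonal d) v u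
      = √((2 * π) ^ Fintype.card ι / (diagonal d).det)
        * Real.exp (-(v ⬝ᵥ (diagonal d)⁻¹ *ᵥ v) / 2) := by
  have hfactor : ∀ i, (π / ((d i / 2 : ℝ) : ℂ)) ^ (1 / 2 : ℂ)
      * Complex.exp ((v i * I) ^ 2 / (4 * ((d i / 2 : ℝ) : ℂ)))
      = ((√(2 * π / d i) * Real.exp (-(v i * (d i)⁻¹ * v i) / 2) : ℝ) : ℂ) := by
    intro i
    have hdi : (d i : ℂ) ≠ 0 := by exact_mod_cast (hd i).ne'
    rw [Complex.ofReal_mul, Complex.ofReal_exp, Real.sqrt_eq_rpow,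
      Complex.ofReal_cpow (by have := hd i; positivity)]
    push_cast
    congr 2
    · field_simp
    · field_simp
      rw [Complex.I_sq]
      ring
  have hinv : (diagonal d)⁻¹ = diagonal d⁻¹ :=
    inv_eq_left_inv (by simp [diagonal_mul_diagonal, fun i => (hd i).ne'])
  simp_rw [gaussKernel_diagonal]
  rw [GaussianFourier.integral_cexp_neg_sum_mul_add (fun i => by simpa using hd i),
    Finset.prod_congr rfl fun i _ => hfactor i, ← Complex.ofReal_prod, Finset.prod_mul_distrib,
    ← Real.sqrt_prod _ fun i _ => (div_pos Real.two_pi_pos (hd i)).le, ← Real.exp_sum,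
    Finset.prod_div_distrib, Finset.prod_const, Finset.card_univ, ← Finset.sum_div,
    Finset.sum_neg_distrib, det_diagonal, hinv, Complex.ofReal_mul]
  simp only [dotProduct, mulVec_diagonal, Pi.inv_apply, mul_assoc]

variable {M : Matrix ι ι ℝ}

lemma integrable_gaussKernel (hM : M.PosDef) (w : ι → ℝ) : Integrable (gaussKernel M w) := by
  obtain ⟨U, d, hU, hd, hMU⟩ := hM.exists_orthogonal_diagonalization
  rw [← (measurePreserving_mulVec hU).integrable_comp
    (continuous_gaussKernel M w).aestronglyMeasurable]
  simpa only [Function.comp_def, gaussKernel_mulVec, hMU] using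
    integrable_gaussKernel_diagonal hd (Uᵀ *ᵥ w)

theorem integral_gaussKernel (hM : M.PosDef) (w : ι → ℝ) :
    ∫ x, gaussKernel M w x
      = √((2 * π) ^ Fintype.card ι / M.det) * Real.exp (-(w ⬝ᵥ M⁻¹ *ᵥ w) / 2) := by
  obtain ⟨U, d, hU, hd, hMU⟩ := hM.exists_orthogonal_diagonalization
  have hmp := measurePreserving_mulVec hU
  have hUU : U * Uᵀ = 1 := mul_eq_one_comm.mp hU
  have hdet : (diagonal d).det = M.det := by
    rw [← hMU, det_mul, det_mul, mul_comm, ← mul_assoc, ← det_mul, hUU, det_one, one_mul]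
  have hquad : (Uᵀ *ᵥ w) ⬝ᵥ (diagonal d)⁻¹ *ᵥ (Uᵀ *ᵥ w) = w ⬝ᵥ M⁻¹ *ᵥ w := by
    rw [← hMU, Matrix.mul_inv_rev, Matrix.mul_inv_rev, inv_eq_left_inv hU, inv_eq_left_inv hUU,
      ← mul_assoc, ← transpose_transpose U, dotProduct_transpose_mul_mul_mulVec,
      transpose_transpose, mulVec_mulVec, hUU, one_mulVec]
  calc ∫ x, gaussKernel M w x = ∫ u, gaussKernel M w (U *ᵥ u) := by
        conv_lhs => rw [← hmp.map_eq]
        exact integral_map hmp.aemeasurable (continuous_gaussKernel M w).aestronglyMeasurable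
    _ = ∫ u, gaussKernel (diagonal d) (Uᵀ *ᵥ w) u := by simp_rw [gaussKernel_mulVec, hMU]
    _ = _ := by rw [integral_gaussKernel_diagonal hd, hdet, hquad]

lemma _root_.Matrix.PosDef.add_transpose_mul_inv_mul {C D : Matrix ι ι ℝ} (hD : D.PosDef)
    (hC : C.PosDef) (L : Matrix ι ι ℝ) : (D + Lᵀ * C⁻¹ * L).PosDef :=
  hD.add_posSemidef <| by
    simpa [conjTranspose_eq_transpose_of_trivial] using
      hC.inv.posSemidef.conjTranspose_mul_mul_same L

variable {C D : Matrix ι ι ℝ}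

lemma integrable_gaussKernel_mul_gaussKernel_mulVec (hD : D.PosDef) (hC : C.PosDef)
    (L : Matrix ι ι ℝ) :
    Integrable (fun p : (ι → ℝ) × (ι → ℝ) => gaussKernel D 0 p.1 * gaussKernel C (L *ᵥ p.1) p.2)
      (volume.prod volume) := by
  refine ((integrable_gaussKernel hD 0).norm.mul_prod (integrable_gaussKernel hC 0).norm).mono'
    (by unfold gaussKernel; fun_prop) (ae_of_all _ fun p => ?_)
  simp [norm_gaussKernel]

theorem integral_gaussKernel_mul_gaussKernel_mulVec (hD : D.PosDef) (hC : C.PosDef)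
    (L : Matrix ι ι ℝ) :
    ∫ p : (ι → ℝ) × (ι → ℝ), gaussKernel D 0 p.1 * gaussKernel C (L *ᵥ p.1) p.2
        ∂(volume.prod volume)
      = √((2 * π) ^ Fintype.card ι / C.det)
        * √((2 * π) ^ Fintype.card ι / (D + Lᵀ * C⁻¹ * L).det) := by
  have hinner : ∀ x, gaussKernel D 0 x * (√((2 * π) ^ Fintype.card ι / C.det)
      * Real.exp (-(L *ᵥ x ⬝ᵥ C⁻¹ *ᵥ (L *ᵥ x)) / 2))
      = √((2 * π) ^ Fintype.card ι / C.det) * gaussKernel (D + Lᵀ * C⁻¹ * L) 0 x := by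
    intro x
    simp only [gaussKernel, ← dotProduct_transpose_mul_mul_mulVec, add_mulVec, dotProduct_add,
      zero_dotProduct, Complex.ofReal_exp]
    rw [mul_left_comm, ← Complex.exp_add]
    congr 2
    push_cast
    ring
  rw [integral_prod _ (integrable_gaussKernel_mul_gaussKernel_mulVec hD hC L)]
  simp_rw [integral_const_mul, integral_gaussKernel hC, hinner, integral_const_mul,
    integral_gaussKernel (hD.add_transpose_mul_inv_mul hC L)]
  simp

variable {L : Matrix ι ι ℝ}

lemma det_add_ne_zero_of_posDef_of_transpose_eq_neg (hC : C.PosDef) (hL : Lᵀ = -L) :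
    (C + L).det ≠ 0 := by
  intro h
  obtain ⟨v, hv, hmul⟩ := exists_mulVec_eq_zero_iff.mpr h
  have hpos : 0 < v ⬝ᵥ C *ᵥ v := by simpa using hC.dotProduct_mulVec_pos hv
  have hzero : v ⬝ᵥ (C + L) *ᵥ v = 0 := by rw [hmul, dotProduct_zero]
  rw [add_mulVec, dotProduct_add, dotProduct_mulVec_self_eq_zero_of_transpose_eq_neg hL,
    add_zero] at hzero
  exact hpos.ne' hzero

lemma det_add_pos_of_posDef_of_transpose_eq_neg (hC : C.PosDef) (hL : Lᵀ = -L) :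
    0 < (C + L).det := by
  have hne : ∀ t : ℝ, (C + t • L).det ≠ 0 := fun t =>
    det_add_ne_zero_of_posDef_of_transpose_eq_neg hC (by rw [transpose_smul, hL, smul_neg])
  by_contra! hle
  obtain ⟨t, ht⟩ := intermediate_value_univ 1 0 (f := fun t : ℝ => (C + t • L).det) (by fun_prop)
    ⟨by simpa using hle, by simpa using hC.det_pos.le⟩
  exact hne t ht

lemma add_mul_inv_mul_transpose_eq (hC : Cᵀ = C) (hL : Lᵀ = -L) (hdet : IsUnit C.det) :
    C + L * C⁻¹ * Lᵀ = (C + L)ᵀ * C⁻¹ * (C + L) := by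
  have hexpand : (C - L) * C⁻¹ * (C + L)
      = C * C⁻¹ * C + C * C⁻¹ * L - L * (C⁻¹ * C) - L * C⁻¹ * L := by noncomm_ring
  rw [transpose_add, hC, hL, ← sub_eq_add_neg, hexpand, mul_nonsing_inv C hdet,
    nonsing_inv_mul C hdet, one_mul, one_mul, mul_one]
  noncomm_ring

variable {A : Matrix ι ι ℝ}

lemma det_pos_of_posDef_symmPart (hA : (symmPart A).PosDef) : 0 < A.det := by
  simpa only [symmPart_add_antisymmPart] using
    det_add_pos_of_posDef_of_transpose_eq_neg hA (transpose_antisymmPart A)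

lemma integrable_complexGaussian (hA : (symmPart A).PosDef) :
    Integrable (fun p : (ι → ℝ) × (ι → ℝ) => complexGaussian A p.1 p.2) (volume.prod volume) := by
  simpa only [complexGaussian_eq_gaussKernel_mul] using
    integrable_gaussKernel_mul_gaussKernel_mulVec hA hA (antisymmPart A)ᵀ

theorem integral_complexGaussian (hA : (symmPart A).PosDef) :
    ∫ p : (ι → ℝ) × (ι → ℝ), complexGaussian A p.1 p.2 ∂(volume.prod volume)
      = (2 * π) ^ Fintype.card ι / A.det := by
  have hdetC := hA.det_pos
  have hdetA := det_pos_of_posDef_symmPart hA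
  simp_rw [complexGaussian_eq_gaussKernel_mul]
  rw [integral_gaussKernel_mul_gaussKernel_mulVec hA hA, transpose_transpose,
    add_mul_inv_mul_transpose_eq (transpose_symmPart A) (transpose_antisymmPart A)
      hdetC.ne'.isUnit, symmPart_add_antisymmPart, det_mul, det_mul, det_transpose,
    det_nonsing_inv, Ring.inverse_eq_inv', ← Complex.ofReal_mul, ← Real.sqrt_mul (by positivity)]
  set c := (symmPart A).det
  rw [show (2 * π) ^ Fintype.card ι / c * ((2 * π) ^ Fintype.card ι / (A.det * c⁻¹ * A.det))
      = ((2 * π) ^ Fintype.card ι / A.det) ^ 2 by field_simp, Real.sqrt_sq (by positivity)]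
  norm_cast

end ComplexGaussian

end

open ComplexGaussian in
theorem complex_gaussian_total_mass {n : ℕ} (A : Matrix (Fin n) (Fin n) ℝ)
    (hC : (((1 : ℝ) / 2) • (A + Aᵀ)).PosDef) :
    (∫ p : (Fin n → ℝ) × (Fin n → ℝ),
        (Complex.exp (-(∑ i, ∑ j, ((p.1 i : ℂ) + (p.2 i : ℂ) * Complex.I) * (A i j : ℂ) *
            ((p.1 j : ℂ) - (p.2 j : ℂ) * Complex.I)) / 2)
          + Complex.exp (-(∑ i, ∑ j, ((p.1 i : ℂ) - (p.2 i : ℂ) * Complex.I) * (A i j : ℂ) *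
            ((p.1 j : ℂ) + (p.2 j : ℂ) * Complex.I)) / 2)))
      = (2 * (2 * Real.pi) ^ n / A.det : ℂ) ∧ 0 < A.det := by
  have hAt : (symmPart Aᵀ).PosDef := by rwa [symmPart_transpose]
  simp_rw [← complexGaussian_transpose, ← complexGaussian.eq_1]
  rw [Measure.volume_eq_prod, integral_add (integrable_complexGaussian hC)
    (integrable_complexGaussian hAt), integral_complexGaussian hC, integral_complexGaussian hAt,
    det_transpose, Fintype.card_fin]
  exact ⟨by ring, det_pos_of_posDef_symmPart hC⟩
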